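/- (Left-to-right step in the proof of the S-rule lemma.) In every Heyting algebra, for all elements a₁, a₂, h₁, h₂: (a₁ ⇔ h₁)ᶜ ⊓ (a₂ ⇔ h₂)ᶜ ⊓ (a₁ ⇔ a₂) ⊓ (h₁ ⇔ h₂) ⊓ (h₁ ⊔ h₁ᶜ) ⊓ (a₂ ⊔ a₂ᶜ) ≤ a₁ ⊔ h₂. -/

import Mathlib

/-!
Split on the two excluded-middle instances. If `a₂`, then `a₂ ⇨ a₁` gives `a₁`; if `h₁`, then
`h₁ ⇨ h₂` gives `h₂`. In the remaining case `a₂ᶜ` and `a₁ ⇨ a₂` give `a₁ᶜ`, and `a₁ᶜ ⊓ h₁ᶜ`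
forces `a₁ ⇔ h₁`, contradicting `(a₁ ⇔ h₁)ᶜ`.
-/

section

open scoped symmDiff

variable {α : Type*}

theorem inf_sup_le_of_inf_le [DistribLattice α] {x b c d : α} (hb : x ⊓ b ≤ d) (hc : x ⊓ c ≤ d) :
    x ⊓ (b ⊔ c) ≤ d :=
  inf_sup_left x b c ▸ sup_le hb hc

theorem inf_bihimp_le_right [GeneralizedHeytingAlgebra α] (a b : α) : a ⊓ (a ⇔ b) ≤ b :=
  (inf_le_inf_left a ((bihimp_def a b).le.trans inf_le_right)).trans inf_himp_le

theorem inf_bihimp_le_left [GeneralizedHeytingAlgebra α] (a b : α) : b ⊓ (a ⇔ b) ≤ a :=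
  bihimp_comm a b ▸ inf_bihimp_le_right b a

variable [HeytingAlgebra α]

theorem compl_inf_bihimp_le (a b : α) : bᶜ ⊓ (a ⇔ b) ≤ aᶜ :=
  le_compl_iff_disjoint_right.2 <| disjoint_iff_inf_le.2 <|
    calc bᶜ ⊓ (a ⇔ b) ⊓ a = bᶜ ⊓ (a ⊓ (a ⇔ b)) := by ac_rfl
      _ ≤ bᶜ ⊓ b := inf_le_inf_left _ (inf_bihimp_le_right a b)
      _ = ⊥ := compl_inf_self b

theorem compl_inf_compl_le_bihimp (a b : α) : aᶜ ⊓ bᶜ ≤ a ⇔ b :=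
  le_bihimp ((inf_le_inf_left b inf_le_right).trans ((inf_compl_self b).trans_le bot_le))
    ((inf_le_inf_left a inf_le_left).trans ((inf_compl_self a).trans_le bot_le))

end

/-- Left-to-right step in the proof of the S-rule lemma. -/
theorem srule_left_to_right {α : Type*} [HeytingAlgebra α] (a₁ a₂ h₁ h₂ : α) :
    (bihimp a₁ h₁)ᶜ ⊓ (bihimp a₂ h₂)ᶜ ⊓ bihimp a₁ a₂ ⊓ bihimp h₁ h₂ ⊓
        (h₁ ⊔ h₁ᶜ) ⊓ (a₂ ⊔ a₂ᶜ) ≤ a₁ ⊔ h₂ := by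
  set Γ := (bihimp a₁ h₁)ᶜ ⊓ (bihimp a₂ h₂)ᶜ ⊓ bihimp a₁ a₂ ⊓ bihimp h₁ h₂
  have hΓa : Γ ≤ bihimp a₁ a₂ := inf_le_left.trans inf_le_right
  have hΓh : Γ ≤ bihimp h₁ h₂ := inf_le_right
  have hΓn : Γ ≤ (bihimp a₁ h₁)ᶜ := inf_le_left.trans <| inf_le_left.trans inf_le_left
  have case_a₂ : Γ ⊓ a₂ ≤ a₁ :=
    inf_comm Γ a₂ ▸ (inf_le_inf_left a₂ hΓa).trans (inf_bihimp_le_left a₁ a₂)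
  have case_h₁ : Γ ⊓ h₁ ≤ h₂ :=
    inf_comm Γ h₁ ▸ (inf_le_inf_left h₁ hΓh).trans (inf_bihimp_le_right h₁ h₂)
  have case_neither : Γ ⊓ a₂ᶜ ⊓ h₁ᶜ ≤ ⊥ := by
    have ha₁ : Γ ⊓ a₂ᶜ ≤ a₁ᶜ :=
      inf_comm Γ a₂ᶜ ▸ (inf_le_inf_left a₂ᶜ hΓa).trans (compl_inf_bihimp_le a₁ a₂)
    calc Γ ⊓ a₂ᶜ ⊓ h₁ᶜ ≤ bihimp a₁ h₁ ⊓ (bihimp a₁ h₁)ᶜ :=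
          le_inf ((inf_le_inf_right h₁ᶜ ha₁).trans (compl_inf_compl_le_bihimp a₁ h₁))
            (inf_le_left.trans (inf_le_left.trans hΓn))
      _ = ⊥ := inf_compl_self _
  refine inf_sup_le_of_inf_le
    (le_sup_of_le_left ((inf_le_inf_right a₂ inf_le_left).trans case_a₂)) ?_
  rw [inf_right_comm]
  exact inf_sup_le_of_inf_le
    (le_sup_of_le_right ((inf_le_inf_right h₁ inf_le_left).trans case_h₁))
    (case_neither.trans bot_le)
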